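/- arXiv:1707.07914 — 2 statements merged into one kernel-verified Lean document; each statement's English description precedes it below -/
import Mathlib

section
/- Let B be a bipartite graph with vertex classes Z and X ∪ Y which is Y-robust, and let L be an odd positive integer. Let B' be the graph obtained from B by replacing each edge zv of B (z ∈ Z, v ∈ X ∪ Y) by a path P_{zv} of length L, with all these paths internally disjoint (that is, B' is the (L−1)-subdivision of B). Then: B' is a bipartite graph; there exists a unique partition Z' ∪ X' of the set of internal vertices of the paths such that Z ∪ Z' and X ∪ X' ∪ Y form the two vertex classes of B'; and B', viewed as a bipartite graph with classes Z ∪ Z' and (X ∪ X') ∪ Y, is Y-robust. -/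
/-- The internal vertices of the `(L−1)`-subdivision of a bipartite graph given by the
relation `R : Z → W → Prop`: for each edge `(z, w)` there are `L − 1` internal vertices. -/
def SubIntl (Z W : Type) (R : Z → W → Prop) (L : ℕ) : Type :=
  {e : Z × W // R e.1 e.2} × Fin (L - 1)

/-- The vertex set of the `(L−1)`-subdivision. -/
def SubVtx (Z W : Type) (R : Z → W → Prop) (L : ℕ) : Type :=
  Z ⊕ W ⊕ SubIntl Z W R L

/-- One direction of the adjacency of the `(L−1)`-subdivision: along the path replacing
an edge `(z, w)`, vertex `z` is at position `0`, the internal vertex `(e, i)` at position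
`i + 1`, and `w` at position `L`. -/
def preAdj {Z W : Type} (R : Z → W → Prop) (L : ℕ) :
    SubVtx Z W R L → SubVtx Z W R L → Prop
  | Sum.inl z, Sum.inr (Sum.inl w) => L = 1 ∧ R z w
  | Sum.inl z, Sum.inr (Sum.inr (e, i)) => e.1.1 = z ∧ (i : ℕ) = 0
  | Sum.inr (Sum.inl w), Sum.inr (Sum.inr (e, i)) => e.1.2 = w ∧ (i : ℕ) + 2 = L
  | Sum.inr (Sum.inr (e, i)), Sum.inr (Sum.inr (e', j)) => e = e' ∧ (i : ℕ) + 1 = (j : ℕ)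
  | _, _ => False

/-- The `(L−1)`-subdivision, as a simple graph: each edge `zv` of `B` is replaced by a
path `P_{zv}` of length `L`, all paths internally disjoint. -/
def subdiv {Z W : Type} (R : Z → W → Prop) (L : ℕ) : SimpleGraph (SubVtx Z W R L) :=
  SimpleGraph.fromRel (preAdj R L)

/-- Membership in the vertex class `Z ∪ Z'` of the subdivision, where `Z'` is a set of
internal vertices. -/
def inZclass {Z W : Type} {R : Z → W → Prop} {L : ℕ}
    (Z' : Set (SubIntl Z W R L)) : SubVtx Z W R L → Prop
  | Sum.inl _ => True
  | Sum.inr (Sum.inl _) => False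
  | Sum.inr (Sum.inr v) => v ∈ Z'

/-!
Every edge of the subdivision joins consecutive vertices of one path `P_e`, so a proper
2-colouring is propagated along each path from its end in `Z`: the class of `Z` must consist
of `Z` and the internal vertices at even distance from `Z`, and as `L` is odd this puts
`X ∪ Y` in the other class.

Reflecting each path about its midpoint shows `|Z'| = |X'|`, so the classes have sizes
`|Z| + |Z'|` and `|X| + |Y| + |Z'|`, and `Y`-robustness of `B'` asks for the same sets `Y'`
as that of `B`. A perfect matching `ξ₀ : Z → X ∪ Y'` of `B` lifts to `B'`: on the path of a
matching edge `z ξ₀(z)` every vertex of the class of `Z` is matched to its successor, on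
every other path to its predecessor.
-/

section Path

variable {Z W : Type} {R : Z → W → Prop} {L : ℕ}

def pathVtx (e : {e : Z × W // R e.1 e.2}) (k : ℕ) : SubVtx Z W R L :=
  if h0 : k = 0 then Sum.inl e.1.1
  else if hk : k < L then Sum.inr (Sum.inr (e, ⟨k - 1, by omega⟩))
  else Sum.inr (Sum.inl e.1.2)

variable (e : {e : Z × W // R e.1 e.2}) {k : ℕ}

theorem pathVtx_zero : pathVtx (L := L) e 0 = Sum.inl e.1.1 := rfl

theorem pathVtx_add_one (hk : k + 1 < L) :
    pathVtx e (k + 1) = Sum.inr (Sum.inr (e, (⟨k, by omega⟩ : Fin (L - 1)))) :=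
  (dif_neg k.succ_ne_zero).trans (dif_pos hk)

theorem pathVtx_self (hL : L ≠ 0) : pathVtx (L := L) e L = Sum.inr (Sum.inl e.1.2) :=
  (dif_neg hL).trans (dif_neg (lt_irrefl L))

theorem eq_of_pathVtx_eq {e' : {e : Z × W // R e.1 e.2}} {k' : ℕ} (hk : 0 < k) (hkL : k ≤ L)
    (hk' : 0 < k') (hkL' : k' ≤ L) (h : pathVtx (L := L) e k = pathVtx e' k') :
    k = k' ∧ e.1.2 = e'.1.2 ∧ (k < L → e = e') := by
  obtain ⟨k, rfl⟩ := Nat.exists_eq_add_one_of_ne_zero hk.ne'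
  obtain ⟨k', rfl⟩ := Nat.exists_eq_add_one_of_ne_zero hk'.ne'
  rcases hkL.lt_or_eq with hkL | hkL <;> rcases hkL'.lt_or_eq with hkL' | hkL'
  · rw [pathVtx_add_one e hkL, pathVtx_add_one e' hkL'] at h
    cases h
    exact ⟨rfl, rfl, fun _ => rfl⟩
  · rw [pathVtx_add_one e hkL, hkL', pathVtx_self e' (by omega)] at h
    cases h
  · rw [pathVtx_add_one e' hkL', hkL, pathVtx_self e (by omega)] at h
    cases h
  · rw [hkL, pathVtx_self e (by omega), hkL', pathVtx_self e' (by omega)] at h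
    exact ⟨by omega, Sum.inl.inj (Sum.inr.inj h), by omega⟩

theorem adj_pathVtx (hk : k < L) : (subdiv R L).Adj (pathVtx e k) (pathVtx e (k + 1)) := by
  rw [subdiv, SimpleGraph.fromRel_adj]
  rcases k with _ | k
  · rw [Nat.zero_add, pathVtx_zero]
    rcases (show 1 = L ∨ 1 < L by omega) with rfl | h1
    · rw [pathVtx_self e one_ne_zero]
      exact ⟨nofun, .inl ⟨rfl, e.2⟩⟩
    · rw [pathVtx_add_one e h1]
      exact ⟨nofun, .inl ⟨rfl, rfl⟩⟩
  · rw [pathVtx_add_one e hk]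
    rcases (show k + 2 = L ∨ k + 2 < L by omega) with rfl | h1
    · rw [pathVtx_self e (by omega)]
      exact ⟨nofun, .inr ⟨rfl, rfl⟩⟩
    · rw [pathVtx_add_one e h1]
      exact ⟨(fun h => by cases h), .inl ⟨rfl, rfl⟩⟩

theorem exists_pathVtx_of_preAdj {a b : SubVtx Z W R L} (hab : preAdj R L a b) :
    ∃ (e : {e : Z × W // R e.1 e.2}) (k : ℕ), k < L ∧
      s(a, b) = s(pathVtx e k, pathVtx e (k + 1)) := by
  rcases a with z | w | ⟨e, i, hi⟩ <;> rcases b with z' | w' | ⟨e', j, hj⟩ <;>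
    simp only [preAdj] at hab
  · obtain ⟨rfl, hzw⟩ := hab
    exact ⟨⟨(z, w'), hzw⟩, 0, one_pos, by rw [Nat.zero_add, pathVtx_self _ one_ne_zero]; rfl⟩
  · obtain ⟨rfl, rfl⟩ := hab
    refine ⟨e', 0, by omega, ?_⟩
    rw [pathVtx_add_one e' (k := 0) (by omega)]
    rfl
  · obtain ⟨rfl, rfl⟩ := hab
    refine ⟨e', j + 1, by omega, Sym2.eq_iff.2 (.inr ⟨?_, ?_⟩)⟩
    · exact (pathVtx_self e' (by omega)).symm
    · exact (pathVtx_add_one e' (k := j) (by omega)).symm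
  · obtain ⟨rfl, rfl⟩ := hab
    refine ⟨e, i + 1, by omega, ?_⟩
    rw [pathVtx_add_one e (k := i) (by omega), pathVtx_add_one e (k := i + 1) (by omega)]
    rfl

theorem exists_pathVtx_of_adj {a b : SubVtx Z W R L} (hab : (subdiv R L).Adj a b) :
    ∃ (e : {e : Z × W // R e.1 e.2}) (k : ℕ), k < L ∧
      s(a, b) = s(pathVtx e k, pathVtx e (k + 1)) := by
  rw [subdiv, SimpleGraph.fromRel_adj] at hab
  rcases hab.2 with h | h
  · exact exists_pathVtx_of_preAdj h
  · rw [Sym2.eq_swap]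
    exact exists_pathVtx_of_preAdj h

end Path

section Bipartition

variable {Z W : Type} {R : Z → W → Prop} {L : ℕ}

/-- The internal vertex `(e, i)` sits at position `i + 1` of its path, so these are the
internal vertices at even distance from `Z`. -/
def oddIntl (Z W : Type) (R : Z → W → Prop) (L : ℕ) : Set (SubIntl Z W R L) :=
  {p | Odd (p.2 : ℕ)}

def IsBipartiteSplit (Z' : Set (SubIntl Z W R L)) : Prop :=
  ∀ a b, (subdiv R L).Adj a b → (inZclass Z' a ↔ ¬ inZclass Z' b)

theorem inZclass_oddIntl_pathVtx (hodd : Odd L) (e : {e : Z × W // R e.1 e.2}) {k : ℕ}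
    (hk : k ≤ L) : inZclass (oddIntl Z W R L) (pathVtx e k) ↔ Even k := by
  rcases k with _ | k
  · exact iff_of_true trivial Even.zero
  rcases hk.lt_or_eq with hk | rfl
  · rw [pathVtx_add_one e hk]
    exact Nat.not_even_iff_odd.symm.trans Nat.even_add_one.symm
  · rw [pathVtx_self e (by omega)]
    exact iff_of_false id (Nat.not_even_iff_odd.2 hodd)

theorem isBipartiteSplit_oddIntl (hodd : Odd L) : IsBipartiteSplit (oddIntl Z W R L) := by
  intro a b hab
  obtain ⟨e, k, hk, h⟩ := exists_pathVtx_of_adj hab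
  have h₁ := inZclass_oddIntl_pathVtx hodd e hk.le
  have h₂ := inZclass_oddIntl_pathVtx hodd e (Nat.succ_le_of_lt hk)
  rw [Nat.even_add_one] at h₂
  rcases Sym2.eq_iff.1 h with ⟨rfl, rfl⟩ | ⟨rfl, rfl⟩ <;> tauto

theorem IsBipartiteSplit.eq_oddIntl {Z' : Set (SubIntl Z W R L)} (hZ' : IsBipartiteSplit Z') :
    Z' = oddIntl Z W R L := by
  have hpath (e : {e : Z × W // R e.1 e.2}) (k : ℕ) (hk : k < L) :
      inZclass Z' (pathVtx e k) ↔ Even k := by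
    induction k with
    | zero => exact iff_of_true trivial Even.zero
    | succ k ih =>
      have := hZ' _ _ (adj_pathVtx e (Nat.lt_of_succ_lt hk))
      rw [Nat.even_add_one, ← ih (Nat.lt_of_succ_lt hk)]
      tauto
  ext ⟨e, i⟩
  have := hpath e (i + 1) (by omega)
  rwa [pathVtx_add_one e (by omega), Nat.even_add_one, Nat.not_even_iff_odd] at this

theorem existsUnique_isBipartiteSplit (hodd : Odd L) :
    ∃! Z' : Set (SubIntl Z W R L), IsBipartiteSplit Z' :=
  ⟨oddIntl Z W R L, isBipartiteSplit_oddIntl hodd, fun _ => IsBipartiteSplit.eq_oddIntl⟩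

theorem exists_pathVtx_of_inZclass_oddIntl {ξ₀ : Z → W} (hR : ∀ z, R z (ξ₀ z)) (hL : 0 < L)
    {v : SubVtx Z W R L} (hv : inZclass (oddIntl Z W R L) v) :
    ∃ e p, v = pathVtx e p ∧ Even p ∧ p < L ∧ (p = 0 → ξ₀ e.1.1 = e.1.2) := by
  rcases v with z | w | ⟨e, i, hi⟩
  · exact ⟨⟨(z, ξ₀ z), hR z⟩, 0, rfl, Even.zero, hL, fun _ => rfl⟩
  · exact hv.elim
  · exact ⟨e, i + 1, (pathVtx_add_one e (by omega)).symm, Odd.add_one hv, by omega, nofun⟩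

/-- `X ∪ X' ∪ Y'`: the class `X ∪ X' ∪ Y` of the subdivision with `Y` replaced by `Y'`. -/
def xClassWith (Z' : Set (SubIntl Z W R L)) (Y Y' : Finset W) : Set (SubVtx Z W R L) :=
  ({v | ¬ inZclass Z' v} \ {v | ∃ y ∈ Y, v = Sum.inr (Sum.inl y)}) ∪
    {v | ∃ y ∈ Y', v = Sum.inr (Sum.inl y)}

end Bipartition

section Counting

variable {Z W : Type} {R : Z → W → Prop} {L : ℕ}

instance [Finite Z] [Finite W] : Finite (SubIntl Z W R L) :=
  inferInstanceAs (Finite ({e : Z × W // R e.1 e.2} × Fin (L - 1)))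

def SubIntl.reflect (p : SubIntl Z W R L) : SubIntl Z W R L := (p.1, p.2.rev)

theorem SubIntl.reflect_involutive : Function.Involutive (SubIntl.reflect (R := R) (L := L)) :=
  fun p => congrArg (p.1, ·) p.2.rev_rev

theorem ncard_compl_oddIntl (hodd : Odd L) :
    (oddIntl Z W R L)ᶜ.ncard = (oddIntl Z W R L).ncard := by
  rw [← Set.ncard_image_of_injective _ SubIntl.reflect_involutive.injective,
    SubIntl.reflect_involutive.image_eq_preimage_symm]
  refine congrArg Set.ncard (Set.ext fun p => ?_)
  change ¬ Odd (p.2.rev : ℕ) ↔ Odd (p.2 : ℕ)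
  obtain ⟨m, rfl⟩ := hodd
  have := p.2.2
  rw [Fin.val_rev, Nat.odd_iff, Nat.odd_iff]
  omega

variable [Finite Z] [Finite W]

theorem ncard_setOf_inZclass (S : Set (SubIntl Z W R L)) :
    {v | inZclass S v}.ncard = Nat.card Z + S.ncard := by
  rw [← Nat.card_coe_set_eq]
  refine (Nat.card_congr (Equiv.subtypeSum.trans
    (Equiv.sumCongr (Equiv.refl _) Equiv.subtypeSum))).trans ?_
  change Nat.card ({_z : Z // True} ⊕ {_w : W // False} ⊕ S) = _
  simp [Nat.card_sum, Nat.card_coe_set_eq]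

theorem ncard_setOf_not_inZclass (S : Set (SubIntl Z W R L)) :
    {v | ¬ inZclass S v}.ncard = Nat.card W + Sᶜ.ncard := by
  rw [← Nat.card_coe_set_eq]
  refine (Nat.card_congr (Equiv.subtypeSum.trans
    (Equiv.sumCongr (Equiv.refl _) Equiv.subtypeSum))).trans ?_
  change Nat.card ({_z : Z // ¬True} ⊕ {_w : W // ¬False} ⊕ ↥Sᶜ) = _
  simp [Nat.card_sum, Nat.card_coe_set_eq]

end Counting

section Matching

variable {Z W : Type} [DecidableEq W] {R : Z → W → Prop} {L : ℕ}

def matchPos (ξ₀ : Z → W) (e : {e : Z × W // R e.1 e.2}) (p : ℕ) : ℕ :=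
  if ξ₀ e.1.1 = e.1.2 then p + 1 else p - 1

def matchingMap (ξ₀ : Z → W) (hR : ∀ z, R z (ξ₀ z)) : SubVtx Z W R L → SubVtx Z W R L
  | Sum.inl z => pathVtx ⟨(z, ξ₀ z), hR z⟩ 1
  | Sum.inr (Sum.inl w) => Sum.inr (Sum.inl w)
  | Sum.inr (Sum.inr (e, i)) => pathVtx e (matchPos ξ₀ e (i + 1))

variable {ξ₀ : Z → W} (hR : ∀ z, R z (ξ₀ z)) {X Y Y' : Finset W}

theorem matchPos_bounds {e : {e : Z × W // R e.1 e.2}} {p : ℕ} (hpe : Even p) (hp : p < L)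
    (h0 : p = 0 → ξ₀ e.1.1 = e.1.2) :
    0 < matchPos ξ₀ e p ∧ matchPos ξ₀ e p ≤ L ∧ (matchPos ξ₀ e p = L → ξ₀ e.1.1 = e.1.2) := by
  unfold matchPos
  split_ifs with hm
  · exact ⟨by omega, by omega, fun _ => hm⟩
  · have := mt h0 hm
    have := Nat.even_iff.1 hpe
    omega

theorem matchingMap_pathVtx (e : {e : Z × W // R e.1 e.2}) {p : ℕ} (hp : p < L)
    (h0 : p = 0 → ξ₀ e.1.1 = e.1.2) :
    matchingMap ξ₀ hR (pathVtx (L := L) e p) = pathVtx e (matchPos ξ₀ e p) := by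
  rcases p with _ | p
  · rw [matchPos, if_pos (h0 rfl)]
    exact congrArg (pathVtx · 1) (Subtype.ext (Prod.ext rfl (h0 rfl)))
  · rw [pathVtx_add_one e hp]
    rfl

theorem adj_matchingMap (hL : 0 < L) {v : SubVtx Z W R L} (hv : inZclass (oddIntl Z W R L) v) :
    (subdiv R L).Adj v (matchingMap ξ₀ hR v) := by
  obtain ⟨e, p, rfl, -, hp, h0⟩ := exists_pathVtx_of_inZclass_oddIntl hR hL hv
  rw [matchingMap_pathVtx hR e hp h0, matchPos]
  split_ifs with hm
  · exact adj_pathVtx e hp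
  · obtain ⟨p, rfl⟩ := Nat.exists_eq_succ_of_ne_zero (mt h0 hm)
    exact (adj_pathVtx e (Nat.lt_of_succ_lt hp)).symm

theorem eq_of_pathVtx_matchPos_eq (hinj : Function.Injective ξ₀)
    {e e' : {e : Z × W // R e.1 e.2}} {p p' : ℕ}
    (hpe : Even p) (hp : p < L) (h0 : p = 0 → ξ₀ e.1.1 = e.1.2)
    (hpe' : Even p') (hp' : p' < L) (h0' : p' = 0 → ξ₀ e'.1.1 = e'.1.2)
    (h : pathVtx (L := L) e (matchPos ξ₀ e p) = pathVtx e' (matchPos ξ₀ e' p')) :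
    e = e' ∧ p = p' := by
  obtain ⟨hq, hqL, hqm⟩ := matchPos_bounds hpe hp h0
  obtain ⟨hq', hqL', hqm'⟩ := matchPos_bounds hpe' hp' h0'
  obtain ⟨hqq, hw, he⟩ := eq_of_pathVtx_eq e hq hqL hq' hqL' h
  obtain rfl : e = e' := by
    rcases hqL.lt_or_eq with hlt | heq
    · exact he hlt
    · have hz : e.1.1 = e'.1.1 := hinj ((hqm heq).trans (hw.trans (hqm' (hqq ▸ heq)).symm))
      exact Subtype.ext (Prod.ext hz hw)
  refine ⟨rfl, ?_⟩
  unfold matchPos at hqq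
  split_ifs at hqq with hm
  · omega
  · have := mt h0 hm
    have := mt h0' hm
    omega

theorem injOn_matchingMap (hL : 0 < L) (hinj : Function.Injective ξ₀) :
    Set.InjOn (matchingMap ξ₀ hR) {v : SubVtx Z W R L | inZclass (oddIntl Z W R L) v} := by
  intro v hv v' hv' h
  obtain ⟨e, p, rfl, hpe, hp, h0⟩ := exists_pathVtx_of_inZclass_oddIntl hR hL hv
  obtain ⟨e', p', rfl, hpe', hp', h0'⟩ := exists_pathVtx_of_inZclass_oddIntl hR hL hv'
  rw [matchingMap_pathVtx hR e hp h0, matchingMap_pathVtx hR e' hp' h0'] at h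
  obtain ⟨rfl, rfl⟩ := eq_of_pathVtx_matchPos_eq hinj hpe hp h0 hpe' hp' h0' h
  rfl

theorem mapsTo_matchingMap (hodd : Odd L) (hdisj : Disjoint X Y)
    (hrange : Set.range ξ₀ = ↑(X ∪ Y')) :
    Set.MapsTo (matchingMap ξ₀ hR) {v : SubVtx Z W R L | inZclass (oddIntl Z W R L) v}
      (xClassWith (oddIntl Z W R L) Y Y') := by
  intro v hv
  obtain ⟨e, p, rfl, hpe, hp, h0⟩ := exists_pathVtx_of_inZclass_oddIntl hR hodd.pos hv
  obtain ⟨hq, hqL, hqm⟩ := matchPos_bounds hpe hp h0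
  have hqodd : Odd (matchPos ξ₀ e p) := by
    unfold matchPos
    split_ifs with hm
    · exact hpe.add_one
    · exact Nat.Even.sub_odd (Nat.one_le_iff_ne_zero.2 (mt h0 hm)) hpe odd_one
  rw [matchingMap_pathVtx hR e hp h0]
  rcases hqL.lt_or_eq with hlt | heq
  · refine .inl ⟨(inZclass_oddIntl_pathVtx hodd e hqL).not.2 (Nat.not_even_iff_odd.2 hqodd), ?_⟩
    rintro ⟨y, -, hy⟩
    obtain ⟨k, hk⟩ := Nat.exists_eq_add_one_of_ne_zero hq.ne'
    rw [hk, pathVtx_add_one e (hk ▸ hlt)] at hy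
    cases hy
  · rw [heq, pathVtx_self e hodd.pos.ne', ← hqm heq]
    have hw : ξ₀ e.1.1 ∈ X ∪ Y' := by
      rw [← Finset.mem_coe, ← hrange]
      exact Set.mem_range_self _
    rcases Finset.mem_union.1 hw with hX | hY'
    · refine .inl ⟨id, ?_⟩
      rintro ⟨y, hy, h⟩
      cases h
      exact Finset.disjoint_left.1 hdisj hX hy
    · exact .inr ⟨_, hY', rfl⟩

theorem surjOn_matchingMap [Fintype W] (hodd : Odd L) (hcover : X ∪ Y = Finset.univ)
    (hrange : Set.range ξ₀ = ↑(X ∪ Y')) :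
    Set.SurjOn (matchingMap ξ₀ hR) {v : SubVtx Z W R L | inZclass (oddIntl Z W R L) v}
      (xClassWith (oddIntl Z W R L) Y Y') := by
  obtain ⟨m, rfl⟩ := hodd
  have hmatched (w : W) (hw : w ∈ X ∪ Y') : Sum.inr (Sum.inl w) ∈
      matchingMap ξ₀ hR '' {v : SubVtx Z W R (2 * m + 1) | inZclass (oddIntl Z W R _) v} := by
    obtain ⟨z, rfl⟩ : w ∈ Set.range ξ₀ := hrange ▸ hw
    refine ⟨pathVtx ⟨(z, ξ₀ z), hR z⟩ (2 * m),
      (inZclass_oddIntl_pathVtx ⟨m, rfl⟩ _ (by omega)).2 (even_two_mul m), ?_⟩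
    rw [matchingMap_pathVtx hR _ (by omega) (fun _ => rfl), matchPos, if_pos rfl,
      pathVtx_self _ (by omega)]
  rintro t (⟨ht, hY⟩ | ⟨y, hy, rfl⟩)
  · rcases t with z | w | ⟨e, i, hi⟩
    · exact absurd trivial ht
    · refine hmatched w (Finset.mem_union_left _ ?_)
      have : w ∈ X ∪ Y := hcover ▸ Finset.mem_univ w
      exact (Finset.mem_union.1 this).resolve_right fun hwY => hY ⟨w, hwY, rfl⟩
    · have hie : i % 2 = 0 := Nat.even_iff.1 (Nat.not_odd_iff_even.1 ht)
      by_cases hm : ξ₀ e.1.1 = e.1.2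
      · refine ⟨pathVtx e i, (inZclass_oddIntl_pathVtx ⟨m, rfl⟩ e (by omega)).2
          (Nat.even_iff.2 hie), ?_⟩
        rw [matchingMap_pathVtx hR e (by omega) (fun _ => hm), matchPos, if_pos hm,
          pathVtx_add_one e (by omega)]
        rfl
      · refine ⟨pathVtx e (i + 2), (inZclass_oddIntl_pathVtx ⟨m, rfl⟩ e (by omega)).2
          (Nat.even_iff.2 (by omega)), ?_⟩
        rw [matchingMap_pathVtx hR e (by omega) (fun h => absurd h (by omega)), matchPos,
          if_neg hm, show i + 2 - 1 = i + 1 from rfl, pathVtx_add_one e (by omega)]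
        rfl
  · exact hmatched y (Finset.mem_union_right _ hy)

theorem bijOn_matchingMap [Fintype W] (hodd : Odd L) (hinj : Function.Injective ξ₀)
    (hdisj : Disjoint X Y) (hcover : X ∪ Y = Finset.univ) (hrange : Set.range ξ₀ = ↑(X ∪ Y')) :
    Set.BijOn (matchingMap ξ₀ hR) {v : SubVtx Z W R L | inZclass (oddIntl Z W R L) v}
      (xClassWith (oddIntl Z W R L) Y Y') :=
  ⟨mapsTo_matchingMap hR hodd hdisj hrange, injOn_matchingMap hR hodd.pos hinj,
    surjOn_matchingMap hR hodd hcover hrange⟩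

end Matching

theorem subdivision_robust_general {Z W : Type} [Fintype Z] [Fintype W] [DecidableEq W]
    (R : Z → W → Prop) (X Y : Finset W)
    (hdisj : Disjoint X Y) (hcover : X ∪ Y = Finset.univ)
    (hrob : ∀ Y' ⊆ Y, Y'.card = Fintype.card Z - X.card →
      ∃ ξ : Z → W, Function.Injective ξ ∧ (∀ z, R z (ξ z)) ∧
        Set.range ξ = ↑(X ∪ Y'))
    (L : ℕ) (hodd : Odd L) :
    -- `B'` is bipartite, with a unique partition of the internal vertices into `Z' ∪ X'`
    -- making `Z ∪ Z'` and `X ∪ X' ∪ Y` its vertex classes: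
    (∃! Z' : Set (SubIntl Z W R L),
      ∀ a b, (subdiv R L).Adj a b → (inZclass Z' a ↔ ¬ inZclass Z' b)) ∧
    -- and for this partition, `B'` is `Y`-robust:
    ∀ Z' : Set (SubIntl Z W R L),
      (∀ a b, (subdiv R L).Adj a b → (inZclass Z' a ↔ ¬ inZclass Z' b)) →
      ∀ Y' ⊆ Y,
        Y'.card = {v | inZclass Z' v}.ncard - ({v | ¬ inZclass Z' v}.ncard - Y.card) →
        ∃ ξ : {v : SubVtx Z W R L // inZclass Z' v} → SubVtx Z W R L,
          Function.Injective ξ ∧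
          (∀ v, (subdiv R L).Adj v.1 (ξ v)) ∧
          Set.range ξ =
            ({v | ¬ inZclass Z' v} \ {v | ∃ y ∈ Y, v = Sum.inr (Sum.inl y)}) ∪
              {v | ∃ y ∈ Y', v = Sum.inr (Sum.inl y)} := by
  refine ⟨existsUnique_isBipartiteSplit hodd, fun Z' hZ' Y' hY' hcard => ?_⟩
  obtain rfl := IsBipartiteSplit.eq_oddIntl hZ'
  have hW : Fintype.card W = X.card + Y.card := by
    rw [← Finset.card_univ, ← hcover, Finset.card_union_of_disjoint hdisj]
  rw [ncard_setOf_inZclass, ncard_setOf_not_inZclass, ncard_compl_oddIntl hodd,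
    Nat.card_eq_fintype_card, Nat.card_eq_fintype_card, hW] at hcard
  obtain ⟨ξ₀, hinj, hR, hrange⟩ := hrob Y' hY' (by omega)
  have hbij := bijOn_matchingMap hR hodd hinj hdisj hcover hrange
  exact ⟨fun v => matchingMap ξ₀ hR v.1, hbij.injOn.injective,
    fun v => adj_matchingMap hR hodd.pos v.2, (Set.image_eq_range _ _).symm.trans hbij.image_eq⟩

/-- **Lemma 5.5 (subdividing a robust bipartite graph).**
Let `B` (given by the relation `R` between `Z` and `W = X ∪ Y`) be a `Y`-robust bipartite
graph and let `L` be odd. Let `B'` be the `(L−1)`-subdivision of `B`. Then `B'` is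
bipartite: there is a *unique* partition `Z' ∪ X'` of the internal vertices such that
`Z ∪ Z'` and `X ∪ X' ∪ Y` are the two vertex classes of `B'`; moreover `B'`, with these
classes, is `Y`-robust. -/
theorem subdivision_robust {Z W : Type} [Fintype Z] [Fintype W] [DecidableEq W]
    (R : Z → W → Prop) (X Y : Finset W)
    (hdisj : Disjoint X Y) (hcover : X ∪ Y = Finset.univ)
    (hXZ : X.card < Fintype.card Z)
    (hZXY : Fintype.card Z < X.card + Y.card)
    (hrob : ∀ Y' ⊆ Y, Y'.card = Fintype.card Z - X.card →
      ∃ ξ : Z → W, Function.Injective ξ ∧ (∀ z, R z (ξ z)) ∧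
        Set.range ξ = ↑(X ∪ Y'))
    (L : ℕ) (hodd : Odd L) :
    -- `B'` is bipartite, with a unique partition of the internal vertices into `Z' ∪ X'`
    -- making `Z ∪ Z'` and `X ∪ X' ∪ Y` its vertex classes:
    (∃! Z' : Set (SubIntl Z W R L),
      ∀ a b, (subdiv R L).Adj a b → (inZclass Z' a ↔ ¬ inZclass Z' b)) ∧
    -- and for this partition, `B'` is `Y`-robust:
    ∀ Z' : Set (SubIntl Z W R L),
      (∀ a b, (subdiv R L).Adj a b → (inZclass Z' a ↔ ¬ inZclass Z' b)) →
      ∀ Y' ⊆ Y,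
        Y'.card = {v | inZclass Z' v}.ncard - ({v | ¬ inZclass Z' v}.ncard - Y.card) →
        ∃ ξ : {v : SubVtx Z W R L // inZclass Z' v} → SubVtx Z W R L,
          Function.Injective ξ ∧
          (∀ v, (subdiv R L).Adj v.1 (ξ v)) ∧
          Set.range ξ =
            ({v | ¬ inZclass Z' v} \ {v | ∃ y ∈ Y, v = Sum.inr (Sum.inl y)}) ∪
              {v | ∃ y ∈ Y', v = Sum.inr (Sum.inl y)} :=
  subdivision_robust_general R X Y hdisj hcover hrob L hodd
end

section
/- Let Δ ≥ 3 be an integer, let F be a graph with maximum degree at most Δ, and let Γ ⊆ V(F) be a subset of size |Γ| ≤ Δ. Then m_1(F_Γ^+) ≤ Δ − 1/2, where F_Γ^+ is the graph obtained from F by adding 3 new vertices, each joined to all vertices of Γ. -/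
/-- The maximum 1-density `m₁(F) = max { e(F') / (v(F') − 1) : F' ⊆ F, v(F') ≥ 2 }`. -/
noncomputable def m1 {V : Type*} (F : SimpleGraph V) : ℝ :=
  sSup {x : ℝ | ∃ F' : F.Subgraph, 2 ≤ F'.verts.ncard ∧
    x = (F'.edgeSet.ncard : ℝ) / ((F'.verts.ncard : ℝ) - 1)}

/-- The graph `F_Γ^+`, obtained from `F` by adding `3` new vertices, each joined to all
vertices of `Γ`. -/
def FGammaPlus {V : Type*} (F : SimpleGraph V) (Γ : Set V) :
    SimpleGraph (V ⊕ Fin 3) :=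
  SimpleGraph.fromRel fun a b =>
    match a, b with
    | Sum.inl u, Sum.inl v => F.Adj u v
    | Sum.inl u, Sum.inr _ => u ∈ Γ
    | _, _ => False

/-!
Let `H ⊆ F_Γ^+` have `a` vertices in `F` and `b ≤ 3` new vertices. Its part inside `F` is a
subgraph of `F` on `a` vertices, so by the degree sum it has at most `a · min(Δ, a - 1) / 2`
edges, and each new vertex is adjacent to at most `|Γ ∩ V(H)| ≤ min(Δ, a)` vertices of `H`.
Hence `2 e(H) ≤ a · min(Δ, a - 1) + 2b · min(Δ, a)`, and a case analysis on `a` (using `b ≤ 3`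
and `Δ ≥ 3`) bounds this by `(2Δ - 1)(a + b - 1)`.
-/

open SimpleGraph

theorem mul_min_pred_add_two_mul_mul_min_le (Δ a b : ℕ) (hΔ : 3 ≤ Δ) (hb : b ≤ 3)
    (hab : 2 ≤ a + b) :
    a * min Δ (a - 1) + 2 * (b * min Δ a) ≤ (2 * Δ - 1) * (a + b - 1) := by
  obtain ⟨c, rfl⟩ : ∃ c, Δ = c + 3 := ⟨Δ - 3, by omega⟩
  rcases Nat.eq_zero_or_eq_succ_pred a with rfl | ha
  · simp
  rw [ha]
  set a' := a.pred
  simp only [Nat.succ_sub_one, show 2 * (c + 3) - 1 = 2 * c + 5 by omega,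
    show a' + 1 + b - 1 = a' + b by omega]
  rcases le_or_gt a' (c + 2) with h | h
  · rw [min_eq_right (by omega), min_eq_right (by omega)]
    rcases Nat.lt_or_ge a' 2 with h2 | h2
    · interval_cases a' <;> nlinarith
    · nlinarith
  · rw [min_eq_left (by omega), min_eq_left (by omega)]
    nlinarith

theorem Set.ncard_preimage_inl_add_ncard_preimage_inr {α β : Type*} {s : Set (α ⊕ β)}
    (hs : s.Finite) : (Sum.inl ⁻¹' s).ncard + (Sum.inr ⁻¹' s).ncard = s.ncard := by
  conv_rhs => rw [← Set.image_preimage_inl_union_image_preimage_inr s]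
  rw [Set.ncard_union_eq (Set.disjoint_left.2 (by rintro _ ⟨_, _, rfl⟩ ⟨_, _, h⟩; cases h))
      ((hs.preimage Sum.inl_injective.injOn).image _)
      ((hs.preimage Sum.inr_injective.injOn).image _),
    Set.ncard_image_of_injective _ Sum.inl_injective,
    Set.ncard_image_of_injective _ Sum.inr_injective]

theorem SimpleGraph.two_mul_ncard_edgeSet_le {W : Type*} [Finite W] (G : SimpleGraph W)
    {D : ℕ} (h : ∀ v, (G.neighborSet v).ncard ≤ D) :
    2 * G.edgeSet.ncard ≤ Nat.card W * min D (Nat.card W - 1) := by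
  classical
  have := Fintype.ofFinite W
  rw [← coe_edgeFinset, Set.ncard_coe_finset, ← sum_degrees_eq_twice_card_edges,
    Nat.card_eq_fintype_card, ← Finset.card_univ, ← smul_eq_mul]
  refine Finset.sum_le_card_nsmul _ _ _ fun v _ => le_min ?_ ?_
  · rw [← card_neighborFinset_eq_degree, ← Set.ncard_coe_finset, coe_neighborFinset]
    exact h v
  · rw [Finset.card_univ]
    exact Nat.le_sub_one_of_lt (G.degree_lt_card_verts v)

theorem SimpleGraph.Subgraph.two_mul_ncard_edgeSet_le {V : Type*} [Finite V]
    {G : SimpleGraph V} {D : ℕ} (hG : ∀ v, (G.neighborSet v).ncard ≤ D) (H : G.Subgraph) :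
    2 * H.edgeSet.ncard ≤ H.verts.ncard * min D (H.verts.ncard - 1) := by
  rw [← H.image_coe_edgeSet_coe,
    Set.ncard_image_of_injective _ (Sym2.map.injective Subtype.val_injective),
    ← Nat.card_coe_set_eq]
  refine H.coe.two_mul_ncard_edgeSet_le fun v => ?_
  calc (H.coe.neighborSet v).ncard = (Subtype.val '' H.coe.neighborSet v).ncard :=
        (Set.ncard_image_of_injective _ Subtype.val_injective).symm
    _ ≤ (G.neighborSet v).ncard :=
        Set.ncard_le_ncard (Set.image_subset_iff.2 fun _ h => H.adj_sub h)
    _ ≤ D := hG v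

theorem m1_le_of_forall_ncard_edgeSet_le {V : Type*} {G : SimpleGraph V} {c : ℝ} (hc : 0 ≤ c)
    (h : ∀ H : G.Subgraph, 2 ≤ H.verts.ncard →
      (H.edgeSet.ncard : ℝ) ≤ c * (H.verts.ncard - 1)) :
    m1 G ≤ c := by
  refine Real.sSup_le ?_ hc
  rintro _ ⟨H, hH, rfl⟩
  have : (2 : ℝ) ≤ H.verts.ncard := by exact_mod_cast hH
  rw [div_le_iff₀ (by linarith)]
  exact h H hH

namespace FGammaPlus

variable {V : Type*} {F : SimpleGraph V} {Γ : Set V}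

@[simp]
theorem adj_inl_inl {u v : V} : (FGammaPlus F Γ).Adj (.inl u) (.inl v) ↔ F.Adj u v := by
  simp only [FGammaPlus, fromRel_adj, ne_eq, Sum.inl.injEq]
  exact ⟨fun h => h.2.elim id F.adj_symm, fun h => ⟨h.ne, .inl h⟩⟩

@[simp]
theorem adj_inl_inr {u : V} {i : Fin 3} : (FGammaPlus F Γ).Adj (.inl u) (.inr i) ↔ u ∈ Γ := by
  simp [FGammaPlus]

@[simp]
theorem adj_inr_inl {u : V} {i : Fin 3} : (FGammaPlus F Γ).Adj (.inr i) (.inl u) ↔ u ∈ Γ := by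
  simp [FGammaPlus]

@[simp]
theorem not_adj_inr_inr {i j : Fin 3} : ¬ (FGammaPlus F Γ).Adj (.inr i) (.inr j) := by
  simp [FGammaPlus]

variable (F Γ) in
def inlHom : F →g FGammaPlus F Γ := ⟨Sum.inl, adj_inl_inl.2⟩

theorem subgraph_edgeSet_subset (H : (FGammaPlus F Γ).Subgraph) :
    H.edgeSet ⊆ Sym2.map Sum.inl '' (H.comap (inlHom F Γ)).edgeSet ∪
      (fun q : Fin 3 × V => s(.inr q.1, .inl q.2)) ''
        ((Sum.inr ⁻¹' H.verts) ×ˢ (Γ ∩ Sum.inl ⁻¹' H.verts)) := by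
  intro e he
  induction e with | h x y => ?_
  have hxy : H.Adj x y := he
  have hG := H.adj_sub hxy
  rcases x with u | i <;> rcases y with v | j
  · exact .inl ⟨s(u, v), ⟨adj_inl_inl.1 hG, hxy⟩, rfl⟩
  · exact .inr ⟨(j, u), ⟨H.edge_vert hxy.symm, adj_inl_inr.1 hG, H.edge_vert hxy⟩,
      Sym2.eq_swap⟩
  · exact .inr ⟨(i, v), ⟨H.edge_vert hxy, adj_inr_inl.1 hG, H.edge_vert hxy.symm⟩, rfl⟩
  · exact (not_adj_inr_inr hG).elim

theorem two_mul_ncard_subgraph_edgeSet_le [Finite V] {Δ : ℕ}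
    (hF : ∀ v, (F.neighborSet v).ncard ≤ Δ) (hΓ : Γ.ncard ≤ Δ)
    (H : (FGammaPlus F Γ).Subgraph) :
    2 * H.edgeSet.ncard ≤
      (Sum.inl ⁻¹' H.verts).ncard * min Δ ((Sum.inl ⁻¹' H.verts).ncard - 1) +
        2 * ((Sum.inr ⁻¹' H.verts).ncard * min Δ (Sum.inl ⁻¹' H.verts).ncard) := by
  set A := Sum.inl ⁻¹' H.verts
  set B := Sum.inr ⁻¹' H.verts
  have hcross : (Γ ∩ A).ncard ≤ min Δ A.ncard :=
    le_min ((Set.ncard_inter_le_ncard_left _ _).trans hΓ) (Set.ncard_inter_le_ncard_right _ _)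
  have hedges :
      H.edgeSet.ncard ≤ (H.comap (inlHom F Γ)).edgeSet.ncard + B.ncard * (Γ ∩ A).ncard :=
    calc H.edgeSet.ncard ≤ _ := Set.ncard_le_ncard (subgraph_edgeSet_subset H)
      _ ≤ _ := Set.ncard_union_le _ _
      _ ≤ _ := add_le_add Set.ncard_image_le ((Set.ncard_image_le).trans Set.ncard_prod.le)
  have hinl := (H.comap (inlHom F Γ)).two_mul_ncard_edgeSet_le hF
  calc 2 * H.edgeSet.ncard
      ≤ 2 * (H.comap (inlHom F Γ)).edgeSet.ncard + 2 * (B.ncard * (Γ ∩ A).ncard) := by omega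
    _ ≤ _ := add_le_add hinl (Nat.mul_le_mul_left _ (Nat.mul_le_mul_left _ hcross))

end FGammaPlus

/-- **Lemma 5.8.** Let `Δ ≥ 3`, let `F` be a graph with maximum degree at most `Δ` and
let `Γ ⊆ V(F)` with `|Γ| ≤ Δ`. Then `m₁(F_Γ^+) ≤ Δ − 1/2`. -/
theorem m1_FGammaPlus_le {V : Type*} [Fintype V] (Δ : ℕ) (hΔ : 3 ≤ Δ)
    (F : SimpleGraph V) (hF : ∀ v, {u | F.Adj v u}.ncard ≤ Δ)
    (Γ : Set V) (hΓ : Γ.ncard ≤ Δ) :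
    m1 (FGammaPlus F Γ) ≤ (Δ : ℝ) - 1 / 2 := by
  have hΔ' : (3 : ℝ) ≤ Δ := by exact_mod_cast hΔ
  refine m1_le_of_forall_ncard_edgeSet_le (by linarith) fun H hH => ?_
  have hv := Set.ncard_preimage_inl_add_ncard_preimage_inr H.verts.toFinite
  have hb : (Sum.inr ⁻¹' H.verts).ncard ≤ 3 := by
    simpa using Set.ncard_le_card (Sum.inr ⁻¹' H.verts)
  have key := (FGammaPlus.two_mul_ncard_subgraph_edgeSet_le hF hΓ H).trans
    (mul_min_pred_add_two_mul_mul_min_le Δ _ _ hΔ hb (hv ▸ hH))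
  rw [hv] at key
  have hkey : ((2 * H.edgeSet.ncard : ℕ) : ℝ) ≤ ((2 * Δ - 1) * (H.verts.ncard - 1) : ℕ) :=
    mod_cast key
  push_cast [Nat.cast_sub (by omega : 1 ≤ 2 * Δ), Nat.cast_sub (by omega : 1 ≤ H.verts.ncard)]
    at hkey
  linarith
end
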